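/- Let 𝔫 be the 8-dimensional nilpotent Lie algebra with basis X₁,…,X₇, Y and nonzero basis brackets (up to antisymmetry) [X₁,X₂]=X₄, [X₁,X₄]=X₅, [X₁,X₅]=X₆, [X₁,X₆]=X₇, [X₂,X₃]=X₆+X₇, [X₃,X₄]=−X₇, [X₁,X₃]=Y. Then: (a) the diagonal map D = Diag(0,1,0,1,1,1,1,0) (with respect to the ordered basis X₁,…,X₇,Y) is a derivation of 𝔫 with tr D = 5 > 0; (b) the center of 𝔫 is spanned by X₇ and Y; (c) for every derivation D′ of 𝔫 which is diagonalizable over ℝ, the restriction of D′ to the center of 𝔫 is singular (i.e. has 0 as an eigenvalue). -/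

import Mathlib

open scoped BigOperators

namespace RNPaper

/-- Structure constants of a skew-symmetric algebra on `ℝⁿ`:
an element of `V = Λ²(ℝⁿ)*⊗ℝⁿ` written in the basis `μ_{ijk}`. -/
abbrev SC (n : ℕ) := Fin n → Fin n → Fin n → ℝ

variable {n : ℕ}

def IsAntisym (c : SC n) : Prop := ∀ i j k, c j i k = - c i j k

/-- The bilinear map `ℝⁿ×ℝⁿ→ℝⁿ` associated to the structure constants `c`. -/
def br (c : SC n) (x y : Fin n → ℝ) : Fin n → ℝ :=
  fun k => ∑ i, ∑ j, x i * y j * c i j k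

def IsJacobi (c : SC n) : Prop :=
  ∀ x y z : Fin n → ℝ,
    br c (br c x y) z + br c (br c y z) x + br c (br c z x) y = 0

def nest (c : SC n) (v : ℕ → (Fin n → ℝ)) : ℕ → (Fin n → ℝ)
  | 0 => v 0
  | k + 1 => br c (v (k + 1)) (nest c v k)

def IsNilpotentBracket (c : SC n) : Prop :=
  ∃ N : ℕ, ∀ v : ℕ → (Fin n → ℝ), nest c v N = 0

/-- `c` is the Lie bracket of a nilpotent Lie algebra. -/
def IsNilpotentLie (c : SC n) : Prop := IsAntisym c ∧ IsJacobi c ∧ IsNilpotentBracket c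

/-- `D` is a derivation of the algebra with structure constants `c`. -/
def IsDeriv (c : SC n) (D : Matrix (Fin n) (Fin n) ℝ) : Prop :=
  ∀ x y : Fin n → ℝ,
    D.mulVec (br c x y) = br c (D.mulVec x) y + br c x (D.mulVec y)

/-- The inner product on `V` making the basis `μ_{ijk}` (`i<j`) orthonormal. -/
def innerV (c d : SC n) : ℝ := ∑ i, ∑ j, ∑ k, if i < j then c i j k * d i j k else 0

/-- The inner product `⟨A,B⟩ = tr(ABᵀ)` on matrices. -/
def innerM (A B : Matrix (Fin n) (Fin n) ℝ) : ℝ := ∑ a, ∑ b, A a b * B a b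

/-- The `gl(n,ℝ)`-action `E·μ = Eμ(·,·) − μ(E·,·) − μ(·,E·)`. -/
def lieAct (E : Matrix (Fin n) (Fin n) ℝ) (c : SC n) : SC n :=
  fun i j k => (∑ l, E k l * c i j l) - (∑ p, E p i * c p j k) - (∑ p, E p j * c i p k)

/-- The `GL(n,ℝ)`-action `(g·μ)(v,w) = g μ(g⁻¹v, g⁻¹w)` in structure constants. -/
def glAct (g : GL (Fin n) ℝ) (c : SC n) : SC n :=
  fun i j k => ∑ p, ∑ q, ∑ l,
    ((g⁻¹ : GL (Fin n) ℝ) : Matrix (Fin n) (Fin n) ℝ) p i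
      * ((g⁻¹ : GL (Fin n) ℝ) : Matrix (Fin n) (Fin n) ℝ) q j
      * ((g : Matrix (Fin n) (Fin n) ℝ) k l) * c p q l

/-- `m` is the moment map: `⟨m(μ),E⟩ = |μ|⁻²⟨E·μ,μ⟩` for all symmetric `E` and `μ ≠ 0`,
with `m(μ)` a symmetric matrix. -/
def IsMomentMap (m : SC n → Matrix (Fin n) (Fin n) ℝ) : Prop :=
  ∀ c : SC n, c ≠ 0 →
    (m c).IsSymm ∧
      ∀ E : Matrix (Fin n) (Fin n) ℝ, E.IsSymm →
        innerM (m c) E = (innerV c c)⁻¹ * innerV (lieAct E c) c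

/-- The centralizer of `D` in `GL(n,ℝ)`. -/
def centralizerSet (D : Matrix (Fin n) (Fin n) ℝ) : Set (GL (Fin n) ℝ) :=
  {g | (g : Matrix (Fin n) (Fin n) ℝ) * D = D * (g : Matrix (Fin n) (Fin n) ℝ)}

lemma one_mem_centralizerSet (D : Matrix (Fin n) (Fin n) ℝ) :
    (1 : GL (Fin n) ℝ) ∈ centralizerSet D := by
  simp [centralizerSet]

/-- `G_D`: the identity component of the centralizer of `D` in `GL(n,ℝ)`. -/
def GD (D : Matrix (Fin n) (Fin n) ℝ) : Set (GL (Fin n) ℝ) :=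
  Subtype.val '' connectedComponent (⟨1, one_mem_centralizerSet D⟩ : centralizerSet D)

/-- The orbit of `c` under a set `S ⊆ GL(n,ℝ)`. -/
def orbitOf (S : Set (GL (Fin n) ℝ)) (c : SC n) : Set (SC n) :=
  (fun g => glAct g c) '' S

noncomputable def diagAct (d : Fin n → ℝ) (c : SC n) : SC n :=
  fun i j k => (d k / (d i * d j)) * c i j k

/-- The orbit `T·μ` of the subgroup of diagonal matrices with positive entries. -/
def Torbit (c : SC n) : Set (SC n) :=
  {x | ∃ d : Fin n → ℝ, (∀ i, 0 < d i) ∧ x = diagAct d c}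

/-- The weight `F_{ij}^k = E_kk − E_ii − E_jj`. -/
def Fwt (i j k : Fin n) : Matrix (Fin n) (Fin n) ℝ :=
  Matrix.single k k 1 - Matrix.single i i 1 - Matrix.single j j 1

/-- `CH_μ`: the convex hull of the weights of `μ`. -/
def CHmu (c : SC n) : Set (Matrix (Fin n) (Fin n) ℝ) :=
  convexHull ℝ {M | ∃ i j k : Fin n, i < j ∧ c i j k ≠ 0 ∧ M = Fwt i j k}

/-- The diagonal part of a matrix. -/
def diagPart (A : Matrix (Fin n) (Fin n) ℝ) : Matrix (Fin n) (Fin n) ℝ :=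
  Matrix.diagonal fun i => A i i

/-- Membership in `𝔱ⁿ_{>0}`, the diagonal matrices with positive diagonal entries. -/
def DiagPos (E : Matrix (Fin n) (Fin n) ℝ) : Prop :=
  ∃ d : Fin n → ℝ, (∀ i, 0 < d i) ∧ E = Matrix.diagonal d

/-- The basis is nice for the bracket `c`. -/
def IsNice (c : SC n) : Prop :=
  (∀ i j k l, c i j k ≠ 0 → c i j l ≠ 0 → k = l) ∧
  ∀ i j r s k, c i j k ≠ 0 → c r s k ≠ 0 →
    ({i, j} : Finset (Fin n)) = {r, s} ∨
      Disjoint ({i, j} : Finset (Fin n)) ({r, s} : Finset (Fin n))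

/-- `A` is diagonalizable over `ℝ`. -/
def IsDiagonalizableR {N : ℕ} (A : Matrix (Fin N) (Fin N) ℝ) : Prop :=
  ∃ g : GL (Fin N) ℝ, ∃ d : Fin N → ℝ,
    A = (g : Matrix (Fin N) (Fin N) ℝ) * Matrix.diagonal d
      * ((g⁻¹ : GL (Fin N) ℝ) : Matrix (Fin N) (Fin N) ℝ)

/-- `D` extended by zero to `𝔰_D = ℝf ⊕ 𝔫` (index `0` corresponds to `f`). -/
def Dext (D : Matrix (Fin n) (Fin n) ℝ) : Matrix (Fin (n + 1)) (Fin (n + 1)) ℝ :=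
  Matrix.of (Fin.cons (fun _ => (0 : ℝ)) (fun k => Fin.cons (0 : ℝ) (fun j => D k j)))

/-- The bracket of `𝔫` extended by zero to `𝔰_D = ℝf ⊕ 𝔫`. -/
def cext (c : SC n) : SC (n + 1) :=
  Fin.cons (fun _ _ => 0)
    (fun i => Fin.cons (fun _ => 0) (fun j => Fin.cons 0 (fun k => c i j k)))

/-- Structure constants of the solvable extension `𝔰_D = ℝf ⊕ 𝔫`, `[f,X] = D X`. -/
def solvSC (D : Matrix (Fin n) (Fin n) ℝ) (c : SC n) : SC (n + 1) :=
  fun i j k =>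
    (if i = 0 then Dext D k j else 0) - (if j = 0 then Dext D k i else 0) + cext c i j k

/-- The matrix of `ad X`. -/
def adM {N : ℕ} (γ : SC N) (X : Fin N → ℝ) : Matrix (Fin N) (Fin N) ℝ :=
  Matrix.of fun k j => ∑ i, X i * γ i j k

/-- The bilinear form with Gram matrix `P`. -/
def bip {N : ℕ} (P : Matrix (Fin N) (Fin N) ℝ) (x y : Fin N → ℝ) : ℝ :=
  dotProduct x (P.mulVec y)

/-- `⟨Ric X,Y⟩` computed via the orthonormal basis `u`:
`−½Σ⟨[X,uₐ],[Y,uₐ]⟩ + ¼ΣΣ⟨[uₐ,u_b],X⟩⟨[uₐ,u_b],Y⟩ − ½ tr(ad X ∘ ad Y)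
 − ½(⟨[H,X],Y⟩+⟨[H,Y],X⟩)`. -/
noncomputable def ricForm {N : ℕ} (γ : SC N) (P : Matrix (Fin N) (Fin N) ℝ)
    (u : Fin N → (Fin N → ℝ)) (H : Fin N → ℝ) (X Y : Fin N → ℝ) : ℝ :=
  -(1 / 2) * (∑ a, bip P (br γ X (u a)) (br γ Y (u a)))
    + (1 / 4) * (∑ a, ∑ b, bip P (br γ (u a) (u b)) X * bip P (br γ (u a) (u b)) Y)
    - (1 / 2) * Matrix.trace (adM γ X * adM γ Y)
    - (1 / 2) * (bip P (br γ H X) Y + bip P (br γ H Y) X)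

/-- `D` is a Ricci negative derivation of `𝔫`: the solvable extension `𝔰_D = ℝf ⊕ 𝔫`
admits an inner product (with Gram matrix `P`) such that `f ⟂ 𝔫`, `D` is symmetric,
and the Ricci operator is negative definite. -/
def IsRicciNegative (c : SC n) (D : Matrix (Fin n) (Fin n) ℝ) : Prop :=
  ∃ P : Matrix (Fin (n + 1)) (Fin (n + 1)) ℝ, P.PosDef ∧
    (∀ j : Fin n, P 0 j.succ = 0) ∧
    (Dext D).transpose * P = P * Dext D ∧
    ∃ u : Fin (n + 1) → (Fin (n + 1) → ℝ),
      (∀ a b, bip P (u a) (u b) = if a = b then 1 else 0) ∧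
      ∃ H : Fin (n + 1) → ℝ,
        (∀ X : Fin (n + 1) → ℝ, bip P H X = Matrix.trace (adM (solvSC D c) X)) ∧
        ∀ X : Fin (n + 1) → ℝ, X ≠ 0 → ricForm (solvSC D c) P u H X X < 0

/-- The bracket `[e_i,e_j] = v e_k` (and `[e_j,e_i] = −v e_k`) as an element of `V`. -/
def brk {N : ℕ} (i j k : Fin N) (v : ℝ) : SC N :=
  fun p q r =>
    if p = i ∧ q = j ∧ r = k then v else if p = j ∧ q = i ∧ r = k then -v else 0


/-- The center `𝔷(𝔫) = {x : [x,𝔫] = 0}`. -/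
def centerSet {N : ℕ} (c : SC N) : Set (Fin N → ℝ) := {x | ∀ y, br c x y = 0}

/-- Proposition 4.3 (i): basis `X₁,…,X₇ = e₀,…,e₆`, `Y = e₇`. -/
def c15 : SC 8 :=
  brk 0 1 3 1 + brk 0 3 4 1 + brk 0 4 5 1 + brk 0 5 6 1 +
    brk 1 2 5 1 + brk 1 2 6 1 + brk 2 3 6 (-1) + brk 0 2 7 1

noncomputable def D15 : Matrix (Fin 8) (Fin 8) ℝ :=
  Matrix.diagonal ![0, 1, 0, 1, 1, 1, 1, 0]


/-!
Derivations preserve the centre `span(X₇, Y)`, so it suffices that a derivation `D` maps the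
centre into `ℝ X₇`, i.e. that the `Y`-components of `D X₇` and `D Y` vanish. By `[X₃,X₄] = -X₇`
the first is the `X₁`-component of `D X₄`, which is zero because `[X₄,X₅] = 0`. The second is
`a₁ + a₃`, where `aᵢ` is the `Xᵢ`-component of `D Xᵢ`. Along the chain
`X₄ = [X₁,X₂], …, X₇ = [X₁,X₆]` each step adds `a₁` to the diagonal entry, while
`D[X₂,X₃] = D(X₆ + X₇)` and `D[X₃,X₄] = -D X₇` give, once the off-diagonal terms cancel,
`a₆ = a₇ = a₂ + a₃` and `a₇ = a₃ + a₄`. Hence `a₁ = 0`, and then `a₃ = 3 a₁ = 0`.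

In the code `Xᵢ` is `Pi.single (i - 1) 1` and `Y` is `Pi.single 7 1`.
-/

section General

variable {c c₁ c₂ : SC n} {D : Matrix (Fin n) (Fin n) ℝ}

lemma br_add_left (c₁ c₂ : SC n) (x y : Fin n → ℝ) :
    br (c₁ + c₂) x y = br c₁ x y + br c₂ x y := by
  ext k
  simp only [br, Pi.add_apply, mul_add, Finset.sum_add_distrib]

lemma IsDeriv.add (h₁ : IsDeriv c₁ D) (h₂ : IsDeriv c₂ D) : IsDeriv (c₁ + c₂) D := by
  intro x y
  simp only [br_add_left, Matrix.mulVec_add, h₁ x y, h₂ x y]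
  abel

lemma isDeriv_diagonal {d : Fin n → ℝ} (h : ∀ i j k, c i j k ≠ 0 → d k = d i + d j) :
    IsDeriv c (Matrix.diagonal d) := by
  intro x y
  ext k
  simp only [br, Matrix.mulVec_diagonal, Pi.add_apply, Finset.mul_sum,
    ← Finset.sum_add_distrib]
  refine Finset.sum_congr rfl fun i _ => Finset.sum_congr rfl fun j _ => ?_
  by_cases hc : c i j k = 0
  · simp [hc]
  · rw [h i j k hc]; ring

lemma isDeriv_brk_diagonal {i j k : Fin n} (v : ℝ) {d : Fin n → ℝ} (h : d k = d i + d j) :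
    IsDeriv (brk i j k v) (Matrix.diagonal d) := by
  refine isDeriv_diagonal fun p q r hpqr => ?_
  simp only [brk] at hpqr
  split_ifs at hpqr with h₁ h₂
  · obtain ⟨rfl, rfl, rfl⟩ := h₁; exact h
  · obtain ⟨rfl, rfl, rfl⟩ := h₂; rw [h, add_comm]
  · exact absurd rfl hpqr

lemma br_single_one_right (c : SC n) (x : Fin n → ℝ) (j : Fin n) :
    br c x (Pi.single j 1) = fun k => ∑ i, x i * c i j k := by
  ext k
  refine Finset.sum_congr rfl fun i _ => ?_
  rw [Finset.sum_eq_single j (fun b _ hb => by simp [hb]) (by simp)]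
  simp

lemma mem_centerSet_iff {x : Fin n → ℝ} :
    x ∈ centerSet c ↔ ∀ j k, ∑ i, x i * c i j k = 0 := by
  refine ⟨fun h j k => by simpa [br_single_one_right] using congrFun (h (Pi.single j 1)) k,
    fun h y => ?_⟩
  ext k
  simp only [br, Pi.zero_apply]
  rw [Finset.sum_comm]
  refine Finset.sum_eq_zero fun j _ => ?_
  simp_rw [mul_right_comm _ (y j), ← Finset.sum_mul, h j k, zero_mul]

lemma IsDeriv.mulVec_mem_centerSet (hD : IsDeriv c D) {x : Fin n → ℝ} (hx : x ∈ centerSet c) :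
    D.mulVec x ∈ centerSet c := by
  intro y
  have := hD x y
  rw [hx y, hx (D.mulVec y), Matrix.mulVec_zero, add_zero] at this
  exact this.symm

lemma IsDeriv.apply_single_single (hD : IsDeriv c D) (i j k : Fin n) :
    ∑ l, D k l * c i j l = ∑ p, D p i * c p j k + ∑ p, D p j * c i p k := by
  simpa [br, Matrix.mulVec, dotProduct, Pi.single_apply] using
    congrFun (hD (Pi.single i 1) (Pi.single j 1)) k

end General

lemma coe_span_pair_single {ι R : Type*} [DecidableEq ι] [Field R] {a b : ι} (hab : a ≠ b) :
    (Submodule.span R ({Pi.single a 1, Pi.single b 1} : Set (ι → R)) : Set (ι → R)) =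
      {x | ∀ i, i ≠ a → i ≠ b → x i = 0} := by
  ext x
  simp only [SetLike.mem_coe, Submodule.mem_span_pair, Set.mem_ofPred_eq]
  constructor
  · rintro ⟨s, t, rfl⟩ i hia hib
    simp [hia, hib]
  · intro hx
    refine ⟨x a, x b, funext fun i => ?_⟩
    by_cases hia : i = a
    · subst hia; simp [hab]
    by_cases hib : i = b
    · subst hib; simp [hia]
    simp [hia, hib, hx i hia hib]

lemma exists_ne_zero_mem_span_pair_apply_eq_zero {K V : Type*} [Field K] [AddCommGroup V]
    [Module K V] (f : V →ₗ[K] V) {u v : V} (huv : LinearIndependent K ![u, v]) {α β : K}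
    (hu : f u = α • u) (hv : f v = β • u) :
    ∃ x ∈ Submodule.span K {u, v}, x ≠ 0 ∧ f x = 0 := by
  have hu_mem : u ∈ Submodule.span K {u, v} := Submodule.subset_span (by simp)
  have hv_mem : v ∈ Submodule.span K {u, v} := Submodule.subset_span (by simp)
  by_cases hα : α = 0
  · exact ⟨u, hu_mem, huv.ne_zero 0, by simp [hu, hα]⟩
  refine ⟨β • u - α • v, sub_mem (Submodule.smul_mem _ _ hu_mem) (Submodule.smul_mem _ _ hv_mem),
    fun h => hα ?_, by simp [hu, hv, smul_smul, mul_comm]⟩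
  have := LinearIndependent.pair_iff.1 huv β (-α) (by rw [neg_smul, ← sub_eq_add_neg, h])
  simpa using this.2

lemma isDeriv_c15_D15 : IsDeriv c15 D15 := by
  unfold c15 D15
  repeat' with_reducible apply IsDeriv.add
  all_goals exact isDeriv_brk_diagonal _ (by simp)

lemma trace_D15 : D15.trace = 5 := by
  simp [D15, Matrix.trace_diagonal, Fin.sum_univ_eight]
  norm_num

lemma centerSet_c15 : centerSet c15 = {x | ∀ i, i ≠ 6 → i ≠ 7 → x i = 0} := by
  ext x
  simp only [mem_centerSet_iff, Set.mem_ofPred_eq]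
  constructor
  · intro h i h6 h7
    fin_cases i
    · simpa [c15, brk, Fin.sum_univ_eight] using h 1 3
    · simpa [c15, brk, Fin.sum_univ_eight] using h 0 3
    · simpa [c15, brk, Fin.sum_univ_eight] using h 0 7
    · simpa [c15, brk, Fin.sum_univ_eight] using h 0 4
    · simpa [c15, brk, Fin.sum_univ_eight] using h 0 5
    · simpa [c15, brk, Fin.sum_univ_eight] using h 0 6
    all_goals contradiction
  · intro hx j k
    simp [Fin.sum_univ_eight, hx, c15, brk]

lemma single_mem_centerSet_c15 {a : Fin 8} (ha : a = 6 ∨ a = 7) :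
    Pi.single a 1 ∈ centerSet c15 := by
  rw [centerSet_c15]
  intro i h6 h7
  rcases ha with rfl | rfl <;> simp [h6, h7]

section DerivationsOfC15

variable {D : Matrix (Fin 8) (Fin 8) ℝ}

lemma IsDeriv.c15_apply_seven_six (hD : IsDeriv c15 D) : D 7 6 = 0 := by
  have h237 : D 7 6 = D 0 3 := by
    simpa [c15, brk, Fin.sum_univ_eight] using hD.apply_single_single 2 3 7
  have h345 : D 0 3 = 0 := by
    simpa [c15, brk, Fin.sum_univ_eight, eq_comm] using hD.apply_single_single 3 4 5
  rw [h237, h345]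

lemma IsDeriv.c15_apply_seven_seven (hD : IsDeriv c15 D) : D 7 7 = 0 := by
  have h066 : D 5 6 = 0 := by
    simpa [c15, brk, Fin.sum_univ_eight, eq_comm] using hD.apply_single_single 0 6 6
  have h235 : D 5 6 = D 1 3 := by
    simpa [c15, brk, Fin.sum_univ_eight] using hD.apply_single_single 2 3 5
  have h014 : D 4 3 = D 3 1 := by
    simpa [c15, brk, Fin.sum_univ_eight] using hD.apply_single_single 0 1 4
  have h035 : D 5 4 = D 4 3 := by
    simpa [c15, brk, Fin.sum_univ_eight] using hD.apply_single_single 0 3 5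
  have h046 : D 6 5 = D 5 4 := by
    simpa [c15, brk, Fin.sum_univ_eight] using hD.apply_single_single 0 4 6
  have h034 : D 4 4 = D 0 0 + D 3 3 := by
    simpa [c15, brk, Fin.sum_univ_eight] using hD.apply_single_single 0 3 4
  have h045 : D 5 5 = D 0 0 + D 4 4 := by
    simpa [c15, brk, Fin.sum_univ_eight] using hD.apply_single_single 0 4 5
  have h056 : D 6 6 = D 0 0 + D 5 5 := by
    simpa [c15, brk, Fin.sum_univ_eight] using hD.apply_single_single 0 5 6
  have h125 : D 5 5 + D 5 6 = D 1 1 + D 2 2 := by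
    simpa [c15, brk, Fin.sum_univ_eight] using hD.apply_single_single 1 2 5
  have h126 : D 6 5 + D 6 6 = D 1 1 + D 3 1 + D 2 2 := by
    simpa [c15, brk, Fin.sum_univ_eight] using hD.apply_single_single 1 2 6
  have h236 : -D 6 6 = -D 2 2 + (-D 1 3 + -D 3 3) := by
    simpa [c15, brk, Fin.sum_univ_eight] using hD.apply_single_single 2 3 6
  have h027 : D 7 7 = D 0 0 + D 2 2 := by
    simpa [c15, brk, Fin.sum_univ_eight] using hD.apply_single_single 0 2 7
  have h00 : D 0 0 = 0 := by linarith
  have h22 : D 2 2 = 0 := by linarith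
  rw [h027, h00, h22, add_zero]

lemma IsDeriv.c15_mulVec_single (hD : IsDeriv c15 D) {a : Fin 8} (ha : a = 6 ∨ a = 7)
    (h7 : D 7 a = 0) : D.mulVec (Pi.single a 1) = D 6 a • Pi.single 6 1 := by
  have hc := hD.mulVec_mem_centerSet (single_mem_centerSet_c15 ha)
  rw [centerSet_c15, Matrix.mulVec_single_one] at hc
  rw [Matrix.mulVec_single_one]
  ext i
  by_cases hi6 : i = 6
  · subst hi6; simp
  by_cases hi7 : i = 7
  · subst hi7; simp [h7]
  simpa [hi6] using hc i hi6 hi7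

end DerivationsOfC15

theorem statement15 :
    (IsDeriv c15 D15 ∧ D15.trace = 5 ∧ 0 < D15.trace) ∧
    centerSet c15 = (Submodule.span ℝ
      ({Pi.single (6 : Fin 8) (1 : ℝ), Pi.single (7 : Fin 8) (1 : ℝ)} :
        Set (Fin 8 → ℝ)) : Set (Fin 8 → ℝ)) ∧
    (∀ D' : Matrix (Fin 8) (Fin 8) ℝ, IsDeriv c15 D' → IsDiagonalizableR D' →
      ∃ x : Fin 8 → ℝ, x ∈ centerSet c15 ∧ x ≠ 0 ∧ D'.mulVec x = 0) := by
  have hZ : centerSet c15 = (Submodule.span ℝ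
      ({Pi.single (6 : Fin 8) (1 : ℝ), Pi.single (7 : Fin 8) (1 : ℝ)} :
        Set (Fin 8 → ℝ)) : Set (Fin 8 → ℝ)) := by
    rw [centerSet_c15, coe_span_pair_single (by decide)]
  have hindep : LinearIndependent ℝ ![(Pi.single 6 1 : Fin 8 → ℝ), Pi.single 7 1] := by
    refine LinearIndependent.pair_iff.2 fun s t h => ⟨?_, ?_⟩
    · simpa using congrFun h 6
    · simpa using congrFun h 7
  refine ⟨⟨isDeriv_c15_D15, trace_D15, by norm_num [trace_D15]⟩, hZ, fun D hD _ => ?_⟩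
  obtain ⟨x, hx, hx0, hDx⟩ := exists_ne_zero_mem_span_pair_apply_eq_zero D.mulVecLin hindep
    (hD.c15_mulVec_single (.inl rfl) hD.c15_apply_seven_six)
    (hD.c15_mulVec_single (.inr rfl) hD.c15_apply_seven_seven)
  exact ⟨x, hZ ▸ hx, hx0, hDx⟩

end RNPaper
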